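/- For arbitrary (non-equilibrium) driving conditions with p − τv ≠ 0, the 5×5 observability matrix O₂ of the augmented ACC system still has rank 3, with null space spanned by the vectors (0, 0, −(u−v)/(p−τv), 1, 0)ᵀ and (0, 0, αv/(p−τv), 0, 1)ᵀ. -/

import Mathlib

/-!
Rows 1 and 4 of `O₂` force `x₀ = x₁ = 0`. On that subspace row 5 is `T` times the relation
`(p - τv) x₂ + (u - v) x₃ - αv x₄ = 0` and row 3 is `-T²` times it, so the null space is the plane
cut out by this relation, parametrised by `x₃, x₄` once `p - τv ≠ 0`. Rank–nullity then gives
rank `5 - 2 = 3`.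
-/

open Matrix

theorem Matrix.rank_add_finrank_ker_mulVecLin {K m n : Type*} [Field K] [Fintype n]
    (A : Matrix m n K) :
    A.rank + Module.finrank K (LinearMap.ker A.mulVecLin) = Fintype.card n := by
  rw [Matrix.rank, LinearMap.finrank_range_add_finrank_ker, Module.finrank_fintype_fun_eq_card]

section FinFivePlane

variable {R : Type*} [CommRing R] (s t : R)

theorem mem_span_fin_five_pair_iff {x : Fin 5 → R} :
    x ∈ Submodule.span R {![0, 0, s, 1, 0], ![0, 0, t, 0, 1]} ↔
      x 0 = 0 ∧ x 1 = 0 ∧ x 2 = s * x 3 + t * x 4 := by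
  rw [Submodule.mem_span_pair]
  constructor
  · rintro ⟨a, b, rfl⟩
    simp only [smul_cons, smul_eq_mul, mul_zero, mul_one, smul_empty, Pi.add_apply,
      cons_val_zero, cons_val_one, cons_val, add_zero, zero_add, true_and]
    ring
  · rintro ⟨h0, h1, h2⟩
    refine ⟨x 3, x 4, ?_⟩
    ext i
    fin_cases i <;> simp [h0, h1, h2, mul_comm]

theorem linearIndependent_fin_five_pair [Nontrivial R] :
    LinearIndependent R ![(![0, 0, s, 1, 0] : Fin 5 → R), ![0, 0, t, 0, 1]] := by
  rw [LinearIndependent.pair_iff]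
  intro a b hab
  exact ⟨by simpa using congrFun hab 3, by simpa using congrFun hab 4⟩

theorem finrank_span_fin_five_pair [Nontrivial R] :
    Module.finrank R (Submodule.span R {(![0, 0, s, 1, 0] : Fin 5 → R), ![0, 0, t, 0, 1]}) = 2 := by
  rw [← Matrix.range_cons_cons_empty _ _ ![],
    finrank_span_eq_card (linearIndependent_fin_five_pair s t), Fintype.card_fin]

end FinFivePlane

section Observability

variable {K : Type*} [Field K]

def accObservabilityMatrix (T p v u α β τ : K) : Matrix (Fin 5) (Fin 5) K :=
  !![1, 0, 0, 0, 0;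
     1, -T, 0, 0, 0;
     1 - α*T^2, -2*T + (τ*α + β)*T^2, -(p - τ*v)*T^2, -(u - v)*T^2, α*v*T^2;
     0, 1, 0, 0, 0;
     α*T, -α*τ*T, (p - τ*v)*T, (u - v)*T, -α*v*T]

theorem accObservabilityMatrix_mulVec (T p v u α β τ : K) (x : Fin 5 → K) :
    accObservabilityMatrix T p v u α β τ *ᵥ x =
      ![x 0, x 0 - T * x 1,
        (1 - α * T ^ 2) * x 0 + (-2 * T + (τ * α + β) * T ^ 2) * x 1
          - T ^ 2 * ((p - τ * v) * x 2 + (u - v) * x 3 - α * v * x 4),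
        x 1,
        α * T * x 0 - α * τ * T * x 1 + T * ((p - τ * v) * x 2 + (u - v) * x 3 - α * v * x 4)] := by
  ext i
  fin_cases i <;> simp [accObservabilityMatrix, mulVec, dotProduct, Fin.sum_univ_five] <;> ring

theorem accObservabilityMatrix_mulVec_eq_zero_iff {T p v u α β τ : K} (hT : T ≠ 0)
    (hpe : p - τ * v ≠ 0) {x : Fin 5 → K} :
    accObservabilityMatrix T p v u α β τ *ᵥ x = 0 ↔
      x 0 = 0 ∧ x 1 = 0 ∧ x 2 = -(u - v) / (p - τ * v) * x 3 + α * v / (p - τ * v) * x 4 := by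
  have solve_x2 : (p - τ * v) * x 2 + (u - v) * x 3 - α * v * x 4 = 0 ↔
      x 2 = -(u - v) / (p - τ * v) * x 3 + α * v / (p - τ * v) * x 4 := by
    rw [div_mul_eq_mul_div, div_mul_eq_mul_div, ← add_div, eq_div_iff hpe]
    constructor <;> intro h <;> linear_combination h
  rw [accObservabilityMatrix_mulVec, ← solve_x2]
  set r := (p - τ * v) * x 2 + (u - v) * x 3 - α * v * x 4
  simp only [cons_eq_zero_iff, zero_empty, and_true]
  constructor
  · rintro ⟨h0, -, -, h1, hr⟩
    refine ⟨h0, h1, ?_⟩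
    simpa [h0, h1, hT] using hr
  · rintro ⟨h0, h1, hr⟩
    simp [h0, h1, hr]

end Observability

theorem acc_observability_nonequilibrium (T p v u α β τ : ℝ)
    (hT : 0 < T) (hpe : p - τ * v ≠ 0) :
    let O : Matrix (Fin 5) (Fin 5) ℝ :=
      !![1, 0, 0, 0, 0;
         1, -T, 0, 0, 0;
         1 - α*T^2, -2*T + (τ*α + β)*T^2, -(p - τ*v)*T^2, -(u - v)*T^2, α*v*T^2;
         0, 1, 0, 0, 0;
         α*T, -α*τ*T, (p - τ*v)*T, (u - v)*T, -α*v*T]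
    O.rank = 3 ∧
    LinearMap.ker O.mulVecLin =
      Submodule.span ℝ {(![0, 0, -(u - v)/(p - τ*v), 1, 0] : Fin 5 → ℝ),
                        (![0, 0, (α*v)/(p - τ*v), 0, 1] : Fin 5 → ℝ)} := by
  intro O
  have hker : LinearMap.ker O.mulVecLin =
      Submodule.span ℝ {(![0, 0, -(u - v)/(p - τ*v), 1, 0] : Fin 5 → ℝ),
                        (![0, 0, (α*v)/(p - τ*v), 0, 1] : Fin 5 → ℝ)} := by
    ext x
    rw [LinearMap.mem_ker, mulVecLin_apply, mem_span_fin_five_pair_iff]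
    exact accObservabilityMatrix_mulVec_eq_zero_iff hT.ne' hpe
  refine ⟨?_, hker⟩
  have rank_nullity := O.rank_add_finrank_ker_mulVecLin
  rw [hker, finrank_span_fin_five_pair, Fintype.card_fin] at rank_nullity
  omega
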